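/- arXiv:1004.1995 — 4 statements merged into one kernel-verified Lean document; each statement's English description precedes it below -/
import Mathlib

section
/- Let x ∈ ℝ₊^{M×M} and let S be the set of M×M permutation matrices. Define A ∈ {0,1}^{M×M} by A_{ij} = 1 iff there exists ρ ∈ S with ρ·x = max_{σ∈S} σ·x and ρ_{ij} = 1. Then any permutation matrix π with π_{ij} = 1 ⟹ A_{ij} = 1 satisfies π·x = max_{σ∈S} σ·x. -/
open Finset

theorem stmt_3 (M : ℕ) (x : Fin M → Fin M → ℝ) (hx : ∀ i j, 0 ≤ x i j)
    (π : Equiv.Perm (Fin M))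
    (hπ : ∀ i : Fin M, ∃ ρ : Equiv.Perm (Fin M),
      (∀ σ : Equiv.Perm (Fin M), ∑ i, x i (σ i) ≤ ∑ i, x i (ρ i)) ∧ ρ i = π i) :
    ∀ σ : Equiv.Perm (Fin M), ∑ i, x i (σ i) ≤ ∑ i, x i (π i) := by
  intro σ
  choose ρ hρopt hρeq using hπ
  rcases le_or_gt M 1 with hM | hM
  · refine le_of_eq (Finset.sum_congr rfl fun i _ => ?_)
    congr 1
    have h1 := (σ i).isLt
    have h2 := (π i).isLt
    exact Fin.ext (by omega)
  · -- M ≥ 2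
    have hM0 : 0 < M := by omega
    set i₀ : Fin M := ⟨0, hM0⟩ with hi₀
    set V : ℝ := ∑ i, x i (ρ i₀ i) with hV
    have hVopt : ∀ τ : Equiv.Perm (Fin M), ∑ i, x i (τ i) ≤ V := hρopt i₀
    have hVk : ∀ k, ∑ i, x i (ρ k i) = V :=
      fun k => le_antisymm (hρopt i₀ (ρ k)) (hρopt k (ρ i₀))
    -- the linear functional
    set f : Matrix (Fin M) (Fin M) ℝ →ₗ[ℝ] ℝ :=
      { toFun := fun A => ∑ i, ∑ j, A i j * x i j
        map_add' := by
          intro A B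
          simp [Matrix.add_apply, add_mul, Finset.sum_add_distrib]
        map_smul' := by
          intro c A
          simp [Matrix.smul_apply, smul_eq_mul, mul_assoc, Finset.mul_sum] } with hf
    have fperm : ∀ τ : Equiv.Perm (Fin M), f (τ.permMatrix ℝ) = ∑ i, x i (τ i) := by
      intro τ
      simp only [hf, LinearMap.coe_mk, AddHom.coe_mk]
      refine Finset.sum_congr rfl fun i _ => ?_
      simp [Equiv.Perm.permMatrix, PEquiv.toMatrix_apply, Equiv.toPEquiv_apply, ite_mul]
    have hc : (0:ℝ) < (M:ℝ) - 1 := by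
      have : (1:ℝ) < (M:ℝ) := by exact_mod_cast hM
      linarith
    set D : Matrix (Fin M) (Fin M) ℝ :=
      ((M:ℝ) - 1)⁻¹ • ((∑ k, (ρ k).permMatrix ℝ) - π.permMatrix ℝ) with hD
    have hrow : ∀ i, ∑ j, ((∑ k, (ρ k).permMatrix ℝ) - π.permMatrix ℝ) i j = (M:ℝ) - 1 := by
      intro i
      simp only [Matrix.sub_apply, Matrix.sum_apply, Equiv.Perm.permMatrix,
        PEquiv.toMatrix_apply, Equiv.toPEquiv_apply, Option.mem_def, Option.some.injEq]
      rw [Finset.sum_sub_distrib, Finset.sum_comm]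
      simp
    have hcol : ∀ j, ∑ i, ((∑ k, (ρ k).permMatrix ℝ) - π.permMatrix ℝ) i j = (M:ℝ) - 1 := by
      intro j
      simp only [Matrix.sub_apply, Matrix.sum_apply, Equiv.Perm.permMatrix,
        PEquiv.toMatrix_apply, Equiv.toPEquiv_apply, Option.mem_def, Option.some.injEq]
      rw [Finset.sum_sub_distrib, Finset.sum_comm]
      have h1 : ∀ τ : Equiv.Perm (Fin M), ∑ i, (if τ i = j then (1:ℝ) else 0) = 1 := by
        intro τ
        rw [Finset.sum_eq_single (τ.symm j)]
        · simp
        · intro b _ hb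
          rw [if_neg]
          intro h
          exact hb (by rw [← h]; simp)
        · simp
      simp only [h1]
      simp
    have hDmem : D ∈ doublyStochastic ℝ (Fin M) := by
      rw [mem_doublyStochastic_iff_sum]
      refine ⟨?_, ?_, ?_⟩
      · intro i j
        refine mul_nonneg (by positivity) ?_
        simp only [Matrix.sub_apply, Matrix.sum_apply, Equiv.Perm.permMatrix,
          PEquiv.toMatrix_apply, Equiv.toPEquiv_apply, Option.mem_def,
          Option.some.injEq, sub_nonneg]
        by_cases h : π i = j
        · calc (if π i = j then (1:ℝ) else 0) = 1 := by simp [h]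
            _ = (if ρ i i = j then (1:ℝ) else 0) := by simp [hρeq i, h]
            _ ≤ ∑ k, (if ρ k i = j then (1:ℝ) else 0) := by
                refine Finset.single_le_sum (f := fun k => if ρ k i = j then (1:ℝ) else 0)
                  (fun k _ => by positivity) (Finset.mem_univ i)
        · have h0 : (if π i = j then (1:ℝ) else 0) = 0 := by simp [h]
          rw [h0]
          exact Finset.sum_nonneg fun k _ => by positivity
      · intro i
        simp only [hD, Matrix.smul_apply, smul_eq_mul, ← Finset.mul_sum]
        rw [hrow i]
        exact inv_mul_cancel₀ hc.ne'
      · intro j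
        simp only [hD, Matrix.smul_apply, smul_eq_mul, ← Finset.mul_sum]
        rw [hcol j]
        exact inv_mul_cancel₀ hc.ne'
    -- Birkhoff: f D ≤ V
    obtain ⟨w, hw0, hw1, hwD⟩ := exists_eq_sum_perm_of_mem_doublyStochastic hDmem
    have hfD : f D ≤ V := by
      rw [← hwD, map_sum]
      calc ∑ τ : Equiv.Perm (Fin M), f (w τ • τ.permMatrix ℝ)
          = ∑ τ : Equiv.Perm (Fin M), w τ * (∑ i, x i (τ i)) := by
            refine Finset.sum_congr rfl fun τ _ => ?_
            rw [map_smul, fperm]; rfl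
        _ ≤ ∑ τ : Equiv.Perm (Fin M), w τ * V := by
            refine Finset.sum_le_sum fun τ _ => mul_le_mul_of_nonneg_left (hVopt τ) (hw0 τ)
        _ = V := by rw [← Finset.sum_mul, hw1, one_mul]
    -- compute f of the unscaled matrix
    have hfE : f ((∑ k, (ρ k).permMatrix ℝ) - π.permMatrix ℝ)
        = (M:ℝ) * V - ∑ i, x i (π i) := by
      rw [map_sub, map_sum, fperm]
      congr 1
      rw [Finset.sum_congr rfl fun k _ => (fperm (ρ k)).trans (hVk k)]
      simp [mul_comm]
    have hED : f ((∑ k, (ρ k).permMatrix ℝ) - π.permMatrix ℝ) = ((M:ℝ) - 1) * f D := by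
      rw [hD, map_smul, smul_eq_mul, ← mul_assoc, mul_inv_cancel₀ hc.ne', one_mul]
    have hle : (M:ℝ) * V - ∑ i, x i (π i) ≤ ((M:ℝ) - 1) * V := by
      rw [← hfE, hED]
      exact mul_le_mul_of_nonneg_left hfD hc.le
    have : V ≤ ∑ i, x i (π i) := by nlinarith
    exact (hVopt σ).trans this
end

section
/- Let λ, q ∈ ℝ₊^{M×M} with λ ≤ Σ_{π∈S} a_π π componentwise, where a_π ≥ 0 and Σ a_π = 1 over the set S of M×M permutation matrices. If λ·q = max_{π∈S} π·q, then for every (i,j) with λ_{ij} > 0 there exists a permutation matrix π with π·q = max_{σ∈S} σ·q and π_{ij} = 1. -/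
open Finset

theorem stmt_4 (M : ℕ) (l q : Fin M → Fin M → ℝ)
    (hl : ∀ i j, 0 ≤ l i j) (hq : ∀ i j, 0 ≤ q i j)
    (a : Equiv.Perm (Fin M) → ℝ) (ha : ∀ π, 0 ≤ a π) (hsum : ∑ π, a π = 1)
    (hdom : ∀ i j, l i j ≤ ∑ π : Equiv.Perm (Fin M), a π * (if π i = j then (1 : ℝ) else 0))
    (hmax : (∑ i, ∑ j, l i j * q i j) =
      Finset.univ.sup' Finset.univ_nonempty (fun σ : Equiv.Perm (Fin M) => ∑ i, q i (σ i)))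
    (i j : Fin M) (hpos : 0 < l i j) :
    ∃ π : Equiv.Perm (Fin M),
      (∑ i, q i (π i)) =
        Finset.univ.sup' Finset.univ_nonempty (fun σ : Equiv.Perm (Fin M) => ∑ i, q i (σ i)) ∧
      π i = j := by
  set V := Finset.univ.sup' Finset.univ_nonempty
      (fun σ : Equiv.Perm (Fin M) => ∑ i, q i (σ i)) with hV
  have hfle : ∀ π : Equiv.Perm (Fin M), (∑ i, q i (π i)) ≤ V := fun π =>
    Finset.le_sup' (fun σ : Equiv.Perm (Fin M) => ∑ i, q i (σ i)) (mem_univ π)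
  have hexp : ∀ π : Equiv.Perm (Fin M), a π * (∑ i, q i (π i))
      = ∑ i, ∑ j, a π * (if π i = j then (1:ℝ) else 0) * q i j := by
    intro π
    rw [Finset.mul_sum]
    refine Finset.sum_congr rfl (fun x _ => ?_)
    rw [Finset.sum_eq_single (π x)]
    · simp
    · intro b _ hb; simp [Ne.symm hb]
    · simp
  have h1 : V ≤ ∑ π, a π * (∑ i, q i (π i)) := by
    rw [← hmax]
    calc (∑ x, ∑ y, l x y * q x y)
        ≤ ∑ x, ∑ y, (∑ π : Equiv.Perm (Fin M),
            a π * (if π x = y then (1:ℝ) else 0)) * q x y :=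
          Finset.sum_le_sum fun x _ => Finset.sum_le_sum fun y _ =>
            mul_le_mul_of_nonneg_right (hdom x y) (hq x y)
      _ = ∑ π, a π * (∑ i, q i (π i)) := by
          simp only [Finset.sum_mul]
          rw [Finset.sum_congr rfl (fun x _ => Finset.sum_comm), Finset.sum_comm]
          exact (Finset.sum_congr rfl fun π _ => (hexp π).symm)
  have h2 : ∑ π, a π * (∑ i, q i (π i)) ≤ V := by
    calc ∑ π, a π * (∑ i, q i (π i)) ≤ ∑ π : Equiv.Perm (Fin M), a π * V := by
          exact Finset.sum_le_sum (fun π _ => mul_le_mul_of_nonneg_left (hfle π) (ha π))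
      _ = V := by rw [← Finset.sum_mul, hsum, one_mul]
  have key : ∑ π, a π * (∑ i, q i (π i)) = V := le_antisymm h2 h1
  have hzero : ∑ π : Equiv.Perm (Fin M), a π * (V - ∑ i, q i (π i)) = 0 := by
    rw [Finset.sum_congr rfl (fun π _ => mul_sub (a π) V _), Finset.sum_sub_distrib, key,
      ← Finset.sum_mul, hsum, one_mul, sub_self]
  have hall : ∀ π : Equiv.Perm (Fin M), 0 < a π → (∑ i, q i (π i)) = V := by
    intro π hπ
    have := (Finset.sum_eq_zero_iff_of_nonneg (fun σ _ =>
      mul_nonneg (ha σ) (sub_nonneg.mpr (hfle σ)))).mp hzero π (mem_univ π)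
    have h3 : V - ∑ i, q i (π i) = 0 := by
      rcases mul_eq_zero.mp this with h | h
      · exact absurd h (ne_of_gt hπ)
      · exact h
    linarith
  have hsumpos : 0 < ∑ π : Equiv.Perm (Fin M), a π * (if π i = j then (1:ℝ) else 0) :=
    lt_of_lt_of_le hpos (hdom i j)
  have : ∃ π : Equiv.Perm (Fin M), 0 < a π * (if π i = j then (1:ℝ) else 0) := by
    by_contra h
    push_neg at h
    have : ∑ π : Equiv.Perm (Fin M), a π * (if π i = j then (1:ℝ) else 0) ≤ 0 :=
      Finset.sum_nonpos (fun π _ => h π)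
    linarith
  obtain ⟨π, hπ⟩ := this
  have hij : π i = j := by
    by_contra h
    simp [h] at hπ
  have hapos : 0 < a π := by
    simp [hij] at hπ
    exact hπ
  exact ⟨π, hall π hapos, hij⟩
end

section
/- If ζ ∈ ℝ₊^{M×M} satisfies ζ·π ≤ 1 for every M×M permutation matrix π, then ζ ≤ Σ_î x_î r_î + Σ_ĵ y_ĵ c_ĵ componentwise for some nonnegative reals x_î, y_ĵ with Σ_î x_î + Σ_ĵ y_ĵ ≤ 1. -/
/-!
Let `D` be the set of matrices dominated entrywise by some `∑ xᵢ rᵢ + ∑ yⱼ cⱼ` with `x, y ≥ 0`,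
`∑ x + ∑ y ≤ 1`. It is the image of a simplex plus the nonpositive orthant, hence closed and
convex. If `ζ ∉ D`, a separating functional `Z ↦ ∑ Zᵢⱼ gᵢⱼ` with threshold `u` has `g ≥ 0` (as `D`
is downward closed) and row and column sums of `g` below `u` (as `rᵢ, cⱼ ∈ D`). Then `g / u` lies
below a doubly stochastic matrix `P`, and Birkhoff's theorem together with `ζ ≥ 0` gives
`ζ · g / u ≤ ζ · P ≤ 1`, contradicting `ζ · g > u`.
-/

open Finset Pointwise

variable {R n : Type*}

section DoublyStochastic

variable [Fintype n] [DecidableEq n]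

lemma sum_sum_mul_permMatrix [NonAssocSemiring R] (ζ : Matrix n n R) (σ : Equiv.Perm n) :
    ∑ i, ∑ j, ζ i j * σ.permMatrix R i j = ∑ i, ζ i (σ i) := by
  simp [PEquiv.toMatrix_apply, Equiv.toPEquiv_apply]

variable [Field R] [LinearOrder R] [IsStrictOrderedRing R]

lemma sum_sum_mul_le_of_mem_doublyStochastic {ζ P : Matrix n n R} {c : R}
    (hζ : ∀ σ : Equiv.Perm n, ∑ i, ζ i (σ i) ≤ c) (hP : P ∈ doublyStochastic R n) :
    ∑ i, ∑ j, ζ i j * P i j ≤ c := by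
  obtain ⟨w, hw0, hw1, rfl⟩ := exists_eq_sum_perm_of_mem_doublyStochastic hP
  calc ∑ i, ∑ j, ζ i j * (∑ σ, w σ • σ.permMatrix R : Matrix n n R) i j
      = ∑ σ, w σ * ∑ i, ∑ j, ζ i j * σ.permMatrix R i j := by
        simp only [Matrix.sum_apply, Matrix.smul_apply, smul_eq_mul, mul_sum,
          mul_left_comm (ζ _ _)]
        exact (sum_congr rfl fun i _ => sum_comm).trans sum_comm
    _ ≤ ∑ σ, w σ * c := by
        simp only [sum_sum_mul_permMatrix]
        exact sum_le_sum fun σ _ => mul_le_mul_of_nonneg_left (hζ σ) (hw0 σ)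
    _ = c := by rw [← sum_mul, hw1, one_mul]

lemma exists_mem_doublyStochastic_le {π : Matrix n n R} (hπ : ∀ i j, 0 ≤ π i j)
    (hrow : ∀ i, ∑ j, π i j ≤ 1) (hcol : ∀ j, ∑ i, π i j ≤ 1) :
    ∃ P ∈ doublyStochastic R n, ∀ i j, π i j ≤ P i j := by
  set r : n → R := fun i => 1 - ∑ j, π i j
  set c : n → R := fun j => 1 - ∑ i, π i j
  set t := ∑ i, r i
  have hr (i : n) : 0 ≤ r i := sub_nonneg.2 (hrow i)
  have hc (j : n) : 0 ≤ c j := sub_nonneg.2 (hcol j)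
  have hct : ∑ j, c j = t := by
    simp only [c, t, r, sum_sub_distrib, sum_comm (f := fun i j => π i j)]
  -- Pad `π` by `r cᵀ / t` (row and column deficits); if `t = 0` all deficits vanish, so
  -- `/ 0 = 0` does no harm.
  have hcancel {a : R} (ha : 0 ≤ a) (hat : a ≤ t) : a * t / t = a := by
    rcases eq_or_ne t 0 with ht | ht
    · rw [le_antisymm (ht ▸ hat) ha, zero_mul, zero_div]
    · exact mul_div_cancel_right₀ a ht
  have hpad (i j : n) : 0 ≤ r i * c j / t :=
    div_nonneg (mul_nonneg (hr i) (hc j)) (sum_nonneg fun i _ => hr i)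
  refine ⟨fun i j => π i j + r i * c j / t, ?_, fun i j => le_add_of_nonneg_right (hpad i j)⟩
  refine mem_doublyStochastic_iff_sum.2 ⟨fun i j => add_nonneg (hπ i j) (hpad i j), fun i => ?_,
    fun j => ?_⟩
  · rw [sum_add_distrib, ← sum_div, ← mul_sum, hct,
      hcancel (hr i) (single_le_sum (fun i _ => hr i) (mem_univ i))]
    exact add_sub_cancel _ _
  · rw [sum_add_distrib, ← sum_div, ← sum_mul, mul_comm,
      hcancel (hc j) (hct ▸ single_le_sum (fun j _ => hc j) (mem_univ j))]
    exact add_sub_cancel _ _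

lemma sum_sum_mul_le_one_of_sum_le_one {ζ π : Matrix n n R} (hζ : ∀ i j, 0 ≤ ζ i j)
    (hfeas : ∀ σ : Equiv.Perm n, ∑ i, ζ i (σ i) ≤ 1) (hπ : ∀ i j, 0 ≤ π i j)
    (hrow : ∀ i, ∑ j, π i j ≤ 1) (hcol : ∀ j, ∑ i, π i j ≤ 1) :
    ∑ i, ∑ j, ζ i j * π i j ≤ 1 := by
  obtain ⟨P, hP, hπP⟩ := exists_mem_doublyStochastic_le hπ hrow hcol
  calc ∑ i, ∑ j, ζ i j * π i j ≤ ∑ i, ∑ j, ζ i j * P i j :=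
        sum_le_sum fun i _ => sum_le_sum fun j _ => mul_le_mul_of_nonneg_left (hπP i j) (hζ i j)
    _ ≤ 1 := sum_sum_mul_le_of_mem_doublyStochastic hfeas hP

lemma sum_sum_mul_le_of_sum_le {ζ π : Matrix n n R} {s : R} (hs : 0 < s)
    (hζ : ∀ i j, 0 ≤ ζ i j) (hfeas : ∀ σ : Equiv.Perm n, ∑ i, ζ i (σ i) ≤ 1)
    (hπ : ∀ i j, 0 ≤ π i j) (hrow : ∀ i, ∑ j, π i j ≤ s) (hcol : ∀ j, ∑ i, π i j ≤ s) :
    ∑ i, ∑ j, ζ i j * π i j ≤ s := by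
  have hrow' (i : n) : ∑ j, (s⁻¹ • π) i j ≤ 1 := by
    simpa only [Matrix.smul_apply, smul_eq_mul, ← mul_sum, inv_mul_le_one₀ hs] using hrow i
  have hcol' (j : n) : ∑ i, (s⁻¹ • π) i j ≤ 1 := by
    simpa only [Matrix.smul_apply, smul_eq_mul, ← mul_sum, inv_mul_le_one₀ hs] using hcol j
  have hscaled := sum_sum_mul_le_one_of_sum_le_one hζ hfeas
    (fun i j => smul_nonneg (inv_nonneg.2 hs.le) (hπ i j)) hrow' hcol'
  simpa only [Matrix.smul_apply, smul_eq_mul, mul_left_comm _ s⁻¹, ← mul_sum,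
    inv_mul_le_one₀ hs] using hscaled

end DoublyStochastic

lemma LinearMap.apply_eq_sum_sum_mul {m : Type*} [CommSemiring R] [Fintype m] [Fintype n]
    [DecidableEq m] [DecidableEq n] (f : (m → n → R) →ₗ[R] R) (Z : m → n → R) :
    f Z = ∑ i, ∑ j, Z i j * f (Pi.single i (Pi.single j 1)) := by
  have hZ : Z = ∑ i, ∑ j, Z i j • Pi.single i (Pi.single j 1) := by
    ext i j
    simp [Finset.sum_apply, Pi.single_apply, ite_apply]
  conv_lhs => rw [hZ]
  simp only [map_sum, map_smul, smul_eq_mul]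

/-- The coordinate `none` is a slack variable: on the standard simplex of `Option (n ⊕ n)` this
map ranges over the combinations `∑ xᵢ rᵢ + ∑ yⱼ cⱼ` with `x, y ≥ 0` and `∑ x + ∑ y ≤ 1`. -/
noncomputable def rowColCombination (n : Type*) :
    (Option (n ⊕ n) → ℝ) →ₗ[ℝ] (n → n → ℝ) :=
  LinearMap.pi fun i => LinearMap.pi fun j =>
    LinearMap.proj (some (.inl i)) + LinearMap.proj (some (.inr j))

lemma rowColCombination_apply (w : Option (n ⊕ n) → ℝ) (i j : n) :
    rowColCombination n w i j = w (some (.inl i)) + w (some (.inr j)) := rfl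

section RowColDominated

variable [Fintype n]

def rowColDominated (n : Type*) [Fintype n] : Set (n → n → ℝ) :=
  rowColCombination n '' stdSimplex ℝ (Option (n ⊕ n)) + Set.Iic 0

lemma convex_rowColDominated : Convex ℝ (rowColDominated n) :=
  ((convex_stdSimplex ℝ _).linear_image _).add (convex_Iic 0)

lemma isClosed_rowColDominated : IsClosed (rowColDominated n) :=
  isClosed_Iic.add_left_of_isCompact
    ((isCompact_stdSimplex ℝ _).image (rowColCombination n).continuous_of_finiteDimensional)

lemma rowColCombination_mem_rowColDominated {w : Option (n ⊕ n) → ℝ}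
    (hw : w ∈ stdSimplex ℝ (Option (n ⊕ n))) : rowColCombination n w ∈ rowColDominated n := by
  rw [← add_zero (rowColCombination n w)]
  exact Set.add_mem_add (Set.mem_image_of_mem _ hw) (Set.mem_Iic.2 le_rfl)

lemma mem_rowColDominated_of_nonpos {Z : n → n → ℝ} (hZ : Z ≤ 0) : Z ∈ rowColDominated n := by
  classical
  have h0 : rowColCombination n (Pi.single none 1) = 0 := by
    ext i j
    simp [rowColCombination_apply]
  rw [← zero_add Z, ← h0]
  exact Set.add_mem_add (Set.mem_image_of_mem _ (single_mem_stdSimplex ℝ none)) (Set.mem_Iic.2 hZ)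

lemma exists_le_of_mem_rowColDominated {Z : n → n → ℝ} (hZ : Z ∈ rowColDominated n) :
    ∃ x y : n → ℝ, (∀ i, 0 ≤ x i) ∧ (∀ j, 0 ≤ y j) ∧ (∑ i, x i) + (∑ j, y j) ≤ 1 ∧
      ∀ i j, Z i j ≤ x i + y j := by
  obtain ⟨_, ⟨w, ⟨hw0, hw1⟩, rfl⟩, N, hN, rfl⟩ := hZ
  refine ⟨fun i => w (some (.inl i)), fun j => w (some (.inr j)), fun i => hw0 _, fun j => hw0 _,
    ?_, fun i j => add_le_of_nonpos_right (hN i j)⟩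
  rw [Fintype.sum_option, Fintype.sum_sum_type] at hw1
  linarith [hw0 none]

theorem mem_rowColDominated_of_sum_perm_le_one [DecidableEq n] {ζ : n → n → ℝ}
    (hζ : ∀ i j, 0 ≤ ζ i j) (hfeas : ∀ σ : Equiv.Perm n, ∑ i, ζ i (σ i) ≤ 1) :
    ζ ∈ rowColDominated n := by
  by_contra hζD
  obtain ⟨f, u, hfD, hfζ⟩ :=
    geometric_hahn_banach_closed_point convex_rowColDominated isClosed_rowColDominated hζD
  set g : n → n → ℝ := fun i j => f (Pi.single i (Pi.single j 1))
  have hf (Z : n → n → ℝ) : f Z = ∑ i, ∑ j, Z i j * g i j :=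
    (f : (n → n → ℝ) →ₗ[ℝ] ℝ).apply_eq_sum_sum_mul Z
  have hu : 0 < u := by simpa using hfD 0 (mem_rowColDominated_of_nonpos le_rfl)
  have hg (i j : n) : 0 ≤ g i j := by
    by_contra! hneg
    have hmem : -((u / -g i j) • Pi.single i (Pi.single j (1 : ℝ))) ∈ rowColDominated n := by
      refine mem_rowColDominated_of_nonpos (neg_nonpos.2 (smul_nonneg ?_ ?_))
      · exact div_nonneg hu.le (neg_nonneg.2 hneg.le)
      · exact Pi.single_nonneg.2 (Pi.single_nonneg.2 zero_le_one)
    have := hfD _ hmem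
    rw [map_neg, map_smul, smul_eq_mul, div_mul_eq_mul_div, div_neg, neg_neg,
      mul_div_cancel_right₀ u hneg.ne] at this
    exact lt_irrefl u this
  have hrow (i : n) : ∑ j, g i j < u := by
    have := hfD _ (rowColCombination_mem_rowColDominated (single_mem_stdSimplex ℝ (some (.inl i))))
    rw [hf] at this
    simpa [rowColCombination_apply, Pi.single_apply] using this
  have hcol (j : n) : ∑ i, g i j < u := by
    have := hfD _ (rowColCombination_mem_rowColDominated (single_mem_stdSimplex ℝ (some (.inr j))))
    rw [hf] at this
    simpa [rowColCombination_apply, Pi.single_apply] using this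
  exact (hf ζ ▸ hfζ).not_ge <| sum_sum_mul_le_of_sum_le (π := g) hu hζ hfeas hg
    (fun i => (hrow i).le) (fun j => (hcol j).le)

end RowColDominated

theorem stmt_6 (M : ℕ) (ζ : Fin M → Fin M → ℝ) (hζ : ∀ i j, 0 ≤ ζ i j)
    (hfeas : ∀ σ : Equiv.Perm (Fin M), ∑ i, ζ i (σ i) ≤ 1) :
    ∃ x y : Fin M → ℝ, (∀ i, 0 ≤ x i) ∧ (∀ j, 0 ≤ y j) ∧
      (∑ i, x i) + (∑ j, y j) ≤ 1 ∧
      ∀ i j, ζ i j ≤ x i + y j :=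
  exists_le_of_mem_rowColDominated (mem_rowColDominated_of_sum_perm_le_one hζ hfeas)
end

section
/- Let S ⊂ ℝ₊^N be a finite set such that whenever π ∈ S and ρ ∈ ℝ₊^N satisfies ρₙ ∈ {0, πₙ} for all n, then ρ ∈ S. If σ lies in the convex hull of S and σ' ∈ ℝ₊^N satisfies σ' ≤ σ componentwise, then σ' lies in the convex hull of S. -/
open Finset

lemma step_aux (N : ℕ) (S : Finset (Fin N → ℝ))
    (hmono : ∀ π ∈ S, ∀ ρ : Fin N → ℝ, (∀ n, ρ n = 0 ∨ ρ n = π n) → ρ ∈ S)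
    (n : Fin N) (σ : Fin N → ℝ) (hσ : σ ∈ convexHull ℝ (S : Set (Fin N → ℝ)))
    (c : ℝ) (hc : 0 ≤ c) (hcle : c ≤ σ n) :
    Function.update σ n c ∈ convexHull ℝ (S : Set (Fin N → ℝ)) := by
  classical
  set L : (Fin N → ℝ) →ₗ[ℝ] (Fin N → ℝ) :=
    LinearMap.pi (fun k => if k = n then 0 else LinearMap.proj k) with hL
  have hLapp : ∀ (x : Fin N → ℝ) (k), L x k = if k = n then 0 else x k := by
    intro x k
    simp only [hL, LinearMap.pi_apply]
    split <;> simp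
  have hLS : L σ ∈ convexHull ℝ (S : Set (Fin N → ℝ)) := by
    have himg : L '' (convexHull ℝ (S : Set (Fin N → ℝ)))
        = convexHull ℝ (L '' (S : Set (Fin N → ℝ))) := L.image_convexHull _
    have hsub : L '' (S : Set (Fin N → ℝ)) ⊆ (S : Set (Fin N → ℝ)) := by
      rintro _ ⟨π, hπ, rfl⟩
      exact hmono π hπ _ (fun k => by rw [hLapp]; split <;> simp)
    have : L σ ∈ convexHull ℝ (L '' (S : Set (Fin N → ℝ))) := by
      rw [← himg]; exact ⟨σ, hσ, rfl⟩
    exact convexHull_mono hsub this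
  rcases eq_or_lt_of_le hcle with h | h
  · rw [h, Function.update_eq_self]
    exact hσ
  · have hσn : 0 < σ n := lt_of_le_of_lt hc h
    set t : ℝ := c / σ n with ht
    have ht0 : 0 ≤ t := div_nonneg hc hσn.le
    have ht1 : t ≤ 1 := (div_le_one hσn).2 hcle
    have heq : Function.update σ n c = t • σ + (1 - t) • L σ := by
      funext k
      rcases eq_or_ne k n with rfl | hne
      · simp [Function.update_self, hLapp, ht, div_mul_cancel₀ _ hσn.ne']
      · rw [Function.update_of_ne hne]
        simp [hLapp, if_neg hne]
        ring
    rw [heq]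
    exact (convex_convexHull ℝ _) hσ hLS ht0 (by linarith) (by ring)

theorem stmt_9 (N : ℕ) (S : Finset (Fin N → ℝ))
    (hSnn : ∀ π ∈ S, ∀ n, 0 ≤ π n)
    (hmono : ∀ π ∈ S, ∀ ρ : Fin N → ℝ, (∀ n, ρ n = 0 ∨ ρ n = π n) → ρ ∈ S)
    (σ : Fin N → ℝ) (hσ : σ ∈ convexHull ℝ (S : Set (Fin N → ℝ)))
    (σ' : Fin N → ℝ) (hσ'nn : ∀ n, 0 ≤ σ' n) (hle : ∀ n, σ' n ≤ σ n) :
    σ' ∈ convexHull ℝ (S : Set (Fin N → ℝ)) := by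
  classical
  have key : ∀ k : ℕ, k ≤ N →
      (fun j : Fin N => if (j : ℕ) < k then σ' j else σ j)
        ∈ convexHull ℝ (S : Set (Fin N → ℝ)) := by
    intro k
    induction k with
    | zero => intro _; simpa using hσ
    | succ k ih =>
      intro hk
      have hkN : k < N := hk
      have ihk := ih (le_of_lt hkN)
      have := step_aux N S hmono ⟨k, hkN⟩ _ ihk (σ' ⟨k, hkN⟩) (hσ'nn _) ?_
      · convert this using 1
        funext j
        rcases eq_or_ne j ⟨k, hkN⟩ with rfl | hne
        · simp [Function.update]
        · have : (j : ℕ) ≠ k := fun h => hne (Fin.ext h)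
          rw [Function.update_of_ne hne]
          by_cases hj : (j : ℕ) < k
          · rw [if_pos hj, if_pos (Nat.lt_succ_of_lt hj)]
          · rw [if_neg hj, if_neg (fun h => hj (lt_of_le_of_ne (Nat.lt_succ_iff.mp h) this))]
      · simp only [Fin.val_mk, lt_irrefl, if_neg]
        exact hle _
  have := key N le_rfl
  convert this using 1
  funext j
  simp [j.isLt]
end
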